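/- arXiv:2208.04041 — 3 statements merged into one kernel-verified Lean document; each statement's English description precedes it below -/
import Mathlib

section
/- The mutual attraction distance between the mutual agreement matrix MA^{2n} and the mutual disagreement matrix MD^{2n} equals 4(n−1)n², which is the maximum possible mutual attraction distance between two realizable (2n)×(2n−1) matrices. -/
/-- A Stable Roommates instance on `N` agents: each agent `a` has a strict
preference order over the other `N - 1` agents, given as an injective
enumeration `pref a : Fin (N - 1) → Fin N` avoiding `a` itself. -/
structure SRInstance (N : ℕ) where
  pref : Fin N → Fin (N - 1) → Fin N
  inj : ∀ a : Fin N, Function.Injective (pref a)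
  ne_self : ∀ (a : Fin N) (i : Fin (N - 1)), pref a i ≠ a

namespace SRInstance

/-- The (1-indexed) position of agent `b` in the preference order of agent `a`. -/
def posOf {N : ℕ} (I : SRInstance N) (a b : Fin N) : ℕ :=
  ∑ j ∈ Finset.univ.filter (fun j : Fin (N - 1) => I.pref a j = b), (j.1 + 1)

/-- The mutual attraction entry of agent `a` at index `i`: the position of `a`
in the preference order of the agent ranked `i`-th by `a`. -/
def MA {N : ℕ} (I : SRInstance N) (a : Fin N) (i : Fin (N - 1)) : ℕ :=
  I.posOf (I.pref a i) a

end SRInstance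

/-- The mutual attraction distance between two SR instances on `N` agents:
the minimum over bijections of the agent sets of the summed ℓ1-distances
between matched mutual attraction vectors. -/
noncomputable def distMAD {N : ℕ} (I I' : SRInstance N) : ℕ :=
  sInf { d | ∃ σ : Fin N ≃ Fin N,
    d = ∑ a : Fin N, ∑ i : Fin (N - 1), Nat.dist (I.MA a i) (I'.MA (σ a) i) }

/-- The mutual attraction distance between two `R × C` matrices over `ℕ`:
the minimum over bijections of the row sets of the summed ℓ1-distances between
matched rows. -/
noncomputable def matDist {R C : ℕ} (M M' : Fin R → Fin C → ℕ) : ℕ :=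
  sInf { d | ∃ σ : Fin R ≃ Fin R,
    d = ∑ i : Fin R, ∑ j : Fin C, Nat.dist (M i j) (M' (σ i) j) }

/-- The mutual agreement matrix `MA^{2n}`: all rows equal `(1, 2, …, 2n-1)`. -/
def MAmat (n : ℕ) : Fin (2 * n) → Fin (2 * n - 1) → ℕ := fun _ j => j.1 + 1

/-- The mutual disagreement matrix `MD^{2n}`: all rows equal
`(2n-1, 2n-2, …, 1)`. -/
def MDmat (n : ℕ) : Fin (2 * n) → Fin (2 * n - 1) → ℕ := fun _ j => 2 * n - (j.1 + 1)

/-- The identity matrix `ID^{2n}`: entry `(i,j)` (1-indexed) is `i` if `j ≥ i`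
and `i - 1` if `j < i`. -/
def IDmat (n : ℕ) : Fin (2 * n) → Fin (2 * n - 1) → ℕ := fun i j =>
  if i.1 ≤ j.1 then i.1 + 1 else i.1

/-
All rows of `MA^{2n}` are equal, as are all rows of `MD^{2n}`, so every row bijection gives the
same cost, and `|k - (2n - k)| = 2|k - n|`.

For the bound, take the identity bijection and pass through the constant `n` in each entry,
`|x - y| ≤ |x - n| + |n - y|`. Over all entries of a mutual attraction matrix on `N` agents each
value `1, …, N - 1` occurs exactly `N` times (agent `c` puts the position `j + 1` on the agent it
ranks `j`-th), so each of the two sums is `N · ∑_{k=1}^{N-1} |k - n| = 2n · n(n - 1)`.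
-/

namespace SRInstance

variable {N : ℕ} (I : SRInstance N)

lemma image_pref (a : Fin N) : Finset.univ.image (I.pref a) = Finset.univ.erase a := by
  refine Finset.eq_of_subset_of_card_le ?_ ?_
  · intro c hc
    obtain ⟨i, -, rfl⟩ := Finset.mem_image.1 hc
    exact Finset.mem_erase.2 ⟨I.ne_self a i, Finset.mem_univ _⟩
  · rw [Finset.card_image_of_injective _ (I.inj a), Finset.card_erase_of_mem (Finset.mem_univ a)]
    simp

lemma sum_pref {M : Type*} [AddCommMonoid M] (a : Fin N) (g : Fin N → M) :
    ∑ i, g (I.pref a i) = ∑ c ∈ Finset.univ.erase a, g c := by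
  rw [← image_pref, Finset.sum_image fun i _ j _ h => I.inj a h]

lemma posOf_pref (c : Fin N) (j : Fin (N - 1)) : I.posOf c (I.pref c j) = j + 1 := by
  simp [posOf, (I.inj c).eq_iff, Finset.filter_eq']

lemma sum_MA {M : Type*} [AddCommMonoid M] (f : ℕ → M) :
    ∑ a, ∑ i, f (I.MA a i) = N • ∑ j : Fin (N - 1), f (j + 1) := by
  calc ∑ a, ∑ i, f (I.MA a i)
      = ∑ a, ∑ c ∈ Finset.univ.erase a, f (I.posOf c a) :=
        Finset.sum_congr rfl fun a _ => I.sum_pref a fun c => f (I.posOf c a)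
    _ = ∑ c, ∑ a ∈ Finset.univ.erase c, f (I.posOf c a) :=
        Finset.sum_comm' fun a c => by simp [and_comm, ne_comm]
    _ = ∑ c : Fin N, ∑ j, f (I.posOf c (I.pref c j)) :=
        Finset.sum_congr rfl fun c _ => (I.sum_pref c fun a => f (I.posOf c a)).symm
    _ = N • ∑ j : Fin (N - 1), f (j + 1) := by simp [posOf_pref]

end SRInstance

lemma distMAD_le_sum_dist {N : ℕ} (I I' : SRInstance N) :
    distMAD I I' ≤ ∑ a, ∑ i, Nat.dist (I.MA a i) (I'.MA a i) :=
  Nat.sInf_le ⟨Equiv.refl _, rfl⟩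

lemma distMAD_le_two_mul_sum_dist {N : ℕ} (I I' : SRInstance N) (m : ℕ) :
    distMAD I I' ≤ 2 * N * ∑ j : Fin (N - 1), Nat.dist (j + 1) m := by
  calc distMAD I I' ≤ ∑ a, ∑ i, Nat.dist (I.MA a i) (I'.MA a i) := distMAD_le_sum_dist I I'
    _ ≤ ∑ a, ∑ i, (Nat.dist (I.MA a i) m + Nat.dist (I'.MA a i) m) := by
        gcongr with a _ i _
        exact (Nat.dist.triangle_inequality _ m _).trans_eq (by rw [Nat.dist_comm m])
    _ = 2 * N * ∑ j : Fin (N - 1), Nat.dist (j + 1) m := by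
        simp only [Finset.sum_add_distrib]
        rw [I.sum_MA (Nat.dist · m), I'.sum_MA (Nat.dist · m), smul_eq_mul]
        ring

lemma matDist_of_const_rows {R C : ℕ} (M M' : Fin R → Fin C → ℕ) (u v : Fin C → ℕ)
    (hM : ∀ i, M i = u) (hM' : ∀ i, M' i = v) :
    matDist M M' = R * ∑ j, Nat.dist (u j) (v j) := by
  have hcost : ∀ σ : Fin R ≃ Fin R, ∑ i, ∑ j, Nat.dist (M i j) (M' (σ i) j)
      = R * ∑ j, Nat.dist (u j) (v j) := by
    intro σ
    simp [hM, hM']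
  have hset : { d | ∃ σ : Fin R ≃ Fin R, d = ∑ i, ∑ j, Nat.dist (M i j) (M' (σ i) j) }
      = {R * ∑ j, Nat.dist (u j) (v j)} := by
    ext d
    simp only [Set.mem_ofPred_eq, Set.mem_singleton_iff, hcost]
    exact ⟨fun ⟨_, h⟩ => h, fun h => ⟨Equiv.refl _, h⟩⟩
  rw [matDist, hset, csInf_singleton]

lemma sum_range_two_mul_sub_one_dist (n : ℕ) :
    ∑ j ∈ Finset.range (2 * n - 1), Nat.dist (j + 1) n = n * (n - 1) := by
  obtain _ | n := n
  · simp
  rw [show 2 * (n + 1) - 1 = 2 * n + 1 by omega, Nat.add_sub_cancel]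
  induction n with
  | zero => simp
  | succ n ih =>
    rw [show 2 * (n + 1) + 1 = 2 * n + 1 + 1 + 1 by ring, Finset.sum_range_succ,
      Finset.sum_range_succ', Finset.sum_congr rfl fun j _ => Nat.dist_succ_succ, ih]
    have hfirst : Nat.dist (0 + 1) (n + 1 + 1) = n + 1 := by simp only [Nat.dist]; omega
    have hlast : Nat.dist (2 * n + 2 + 1) (n + 1 + 1) = n + 1 := by simp only [Nat.dist]; omega
    rw [hfirst, hlast]
    ring

/-- The mutual attraction distance between `MA^{2n}` and `MD^{2n}` equals
`4(n-1)n²`, which is the maximum possible mutual attraction distance between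
two realizable `(2n) × (2n-1)` matrices, i.e., between any two SR instances on
`2n` agents. -/
theorem matDist_MA_MD (n : ℕ) :
    matDist (MAmat n) (MDmat n) = 4 * (n - 1) * n ^ 2 ∧
    ∀ I I' : SRInstance (2 * n), distMAD I I' ≤ 4 * (n - 1) * n ^ 2 := by
  have hmedian : ∑ j : Fin (2 * n - 1), Nat.dist (j + 1) n = n * (n - 1) := by
    rw [Fin.sum_univ_eq_sum_range (fun j => Nat.dist (j + 1) n), sum_range_two_mul_sub_one_dist]
  constructor
  · have hreflect : ∀ j : Fin (2 * n - 1),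
        Nat.dist (j + 1) (2 * n - (j + 1)) = 2 * Nat.dist (j + 1) n := by
      intro j
      have := j.isLt
      simp only [Nat.dist]
      omega
    rw [matDist_of_const_rows (MAmat n) (MDmat n) (fun j => j + 1) (fun j => 2 * n - (j + 1))
      (fun _ => rfl) (fun _ => rfl)]
    simp only [hreflect, ← Finset.mul_sum, hmedian]
    ring
  · intro I I'
    refine (distMAD_le_two_mul_sum_dist I I' n).trans_eq ?_
    rw [hmedian]
    ring
end

section
/- The mutual attraction distance between the identity matrix ID^{2n} and the mutual agreement matrix MA^{2n} equals (8/3)n³ − 4n² + (4/3)n. -/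
/-! Since all rows of `MA^{2n}` coincide, every matching of rows costs the same, so the distance
is the plain entrywise sum. Row `i` (0-indexed) of `ID^{2n}` differs from `(1, …, 2n-1)` by
`i-1, …, 1, 0` left of the diagonal and by `0, 1, …, 2n-2-i` right of it, so its cost is
`C(i,2) + C(2n-1-i,2)`; by symmetry and the hockey-stick identity the total is `2 C(2n,3)`. -/

open Finset

theorem matDist_const_rows {R C : ℕ} (M : Fin R → Fin C → ℕ) (r : Fin C → ℕ) :
    matDist M (fun _ => r) = ∑ i, ∑ j, Nat.dist (M i j) (r j) := by
  simp [matDist]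

theorem sum_range_choose_eq_choose_succ (m k : ℕ) :
    ∑ i ∈ range m, i.choose k = m.choose (k + 1) := by
  induction m with
  | zero => simp
  | succ m ih => rw [sum_range_succ, ih, Nat.choose_succ_succ' m, add_comm]

theorem sum_range_id_eq_choose_two (m : ℕ) : ∑ i ∈ range m, i = m.choose 2 := by
  simpa using sum_range_choose_eq_choose_succ m 1

theorem sum_range_dist_IDmat_row {i m : ℕ} (h : i ≤ m) :
    ∑ j ∈ range m, Nat.dist (if i ≤ j then i + 1 else i) (j + 1)
      = i.choose 2 + (m - i).choose 2 := by
  rw [← sum_range_add_sum_Ico _ h, sum_Ico_eq_sum_range,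
    ← sum_range_id_eq_choose_two, ← sum_range_id_eq_choose_two,
    ← sum_range_reflect (fun j => j) i]
  congr 1
  · refine sum_congr rfl fun j hj => ?_
    have : j < i := mem_range.mp hj
    rw [if_neg (by omega), Nat.dist_eq_sub_of_le_right (by omega)]
    omega
  · refine sum_congr rfl fun j _ => ?_
    rw [if_pos (Nat.le_add_right i j), Nat.dist_eq_sub_of_le (by omega)]
    omega

theorem sum_range_choose_two_add_reflect (m : ℕ) :
    ∑ i ∈ range m, (i.choose 2 + (m - 1 - i).choose 2) = 2 * m.choose 3 := by
  rw [sum_add_distrib, sum_range_reflect (fun i => i.choose 2), sum_range_choose_eq_choose_succ,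
    two_mul]

theorem six_mul_choose_three (m : ℕ) : 6 * m.choose 3 = m * (m - 1) * (m - 2) := by
  rw [show 6 = Nat.factorial 3 from rfl, ← Nat.descFactorial_eq_factorial_mul_choose]
  simp only [Nat.descFactorial_succ, Nat.descFactorial_zero, Nat.sub_zero]
  ring

theorem matDist_ID_MA_eq_two_mul_choose (n : ℕ) :
    matDist (IDmat n) (MAmat n) = 2 * (2 * n).choose 3 := by
  unfold MAmat
  rw [matDist_const_rows, ← sum_range_choose_two_add_reflect]
  simp only [IDmat]
  rw [Fin.sum_univ_eq_sum_range (fun i => ∑ j : Fin (2 * n - 1),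
    Nat.dist (if i ≤ j.1 then i + 1 else i) (j.1 + 1))]
  refine sum_congr rfl fun i hi => ?_
  rw [Fin.sum_univ_eq_sum_range (fun j => Nat.dist (if i ≤ j then i + 1 else i) (j + 1)),
    sum_range_dist_IDmat_row (by have := mem_range.mp hi; omega)]

/-- The mutual attraction distance between `ID^{2n}` and `MA^{2n}` equals
`(8/3)n³ − 4n² + (4/3)n` (stated multiplied by 3 to stay in `ℕ`). -/
theorem matDist_ID_MA (n : ℕ) :
    3 * matDist (IDmat n) (MAmat n) + 12 * n ^ 2 = 8 * n ^ 3 + 4 * n := by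
  rw [matDist_ID_MA_eq_two_mul_choose, ← mul_assoc, show 3 * 2 = 6 from rfl, six_mul_choose_three]
  rcases n with _ | n
  · rfl
  · rw [show 2 * (n + 1) - 1 = 2 * n + 1 by omega, show 2 * (n + 1) - 2 = 2 * n by omega]
    ring
end

section
/- The mutual attraction distance between the identity matrix ID^{2n} and the mutual disagreement matrix MD^{2n} equals (8/3)n³ − 2n² − (2/3)n. -/
open Finset

theorem sum_range_dist_self (m : ℕ) :
    ∑ i ∈ range m, Nat.dist i m = ∑ i ∈ range (m + 1), i := by
  rw [sum_range_succ', ← sum_range_reflect]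
  refine sum_congr rfl fun i hi => ?_
  simp only [mem_range] at hi
  simp only [Nat.dist]
  omega

theorem three_mul_sum_range_sum_range_dist_add (m : ℕ) :
    3 * ∑ i ∈ range m, ∑ j ∈ range m, Nat.dist i j + m = m ^ 3 := by
  induction m with
  | zero => simp
  | succ m ih =>
    have hrow : ∑ j ∈ range m, Nat.dist m j = ∑ i ∈ range m, Nat.dist i m :=
      sum_congr rfl fun _ _ => Nat.dist_comm _ _
    have hgauss := sum_range_id_mul_two (m + 1)
    rw [Nat.add_sub_cancel] at hgauss
    simp only [sum_range_succ, sum_add_distrib, hrow, Nat.dist_self, sum_range_dist_self]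
      at hgauss ⊢
    linarith

theorem sum_range_dist_center (p : ℕ) :
    ∑ j ∈ range (2 * p + 1), Nat.dist j p = p * (p + 1) := by
  have hshift : ∑ x ∈ range (p + 1), Nat.dist (p + x) p = ∑ x ∈ range (p + 1), x :=
    sum_congr rfl fun x _ => by
      rw [Nat.dist_eq_sub_of_le_right (Nat.le_add_right p x), Nat.add_sub_cancel_left]
  have hgauss := sum_range_id_mul_two (p + 1)
  rw [Nat.add_sub_cancel] at hgauss
  rw [two_mul, add_assoc, sum_range_add, sum_range_dist_self, hshift]
  linarith

/-- For `i ≤ m` the values `if i ≤ k then i + 1 else i` run through `1, …, m` and hit `k + 1`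
twice. -/
theorem sum_range_succ_ite_le {M : Type*} [AddCommMonoid M] (f : ℕ → M) {k m : ℕ} (hkm : k ≤ m) :
    ∑ i ∈ range (m + 1), f (if i ≤ k then i + 1 else i) = ∑ v ∈ range m, f (v + 1) + f (k + 1) := by
  induction m, hkm using Nat.le_induction with
  | base =>
    rw [sum_range_succ, if_pos le_rfl]
    congr 1
    exact sum_congr rfl fun i hi => by rw [if_pos (by simp only [mem_range] at hi; omega)]
  | succ m _ ih =>
    rw [sum_range_succ, ih, sum_range_succ, if_neg (by omega), add_right_comm]

theorem sum_range_sum_range_dist_ite (m : ℕ) :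
    ∑ j ∈ range m, ∑ i ∈ range (m + 1), Nat.dist (if i ≤ j then i + 1 else i) (m - j)
      = ∑ i ∈ range m, ∑ j ∈ range m, Nat.dist i j
        + ∑ j ∈ range m, Nat.dist (j + 1) (m - j) := by
  rw [sum_congr rfl fun j hj =>
    sum_range_succ_ite_le (fun v => Nat.dist v (m - j)) (mem_range.1 hj).le, sum_add_distrib]
  congr 1
  conv_lhs => rw [← sum_range_reflect]
  refine sum_congr rfl fun j hj => sum_congr rfl fun i _ => ?_
  simp only [mem_range] at hj
  rw [show m - (m - 1 - j) = j + 1 by omega, Nat.dist_add_add_right, Nat.dist_comm]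

theorem matDist_IDmat_MDmat (n : ℕ) :
    matDist (IDmat n) (MDmat n) = ∑ j ∈ range (2 * n - 1), ∑ i ∈ range (2 * n),
      Nat.dist (if i ≤ j then i + 1 else i) (2 * n - (j + 1)) := by
  rw [show MDmat n = fun _ j => 2 * n - (j.1 + 1) from rfl, matDist_const_rows, sum_comm]
  simp only [IDmat]
  rw [Fin.sum_univ_eq_sum_range (fun j => ∑ i : Fin (2 * n),
    Nat.dist (if (i : ℕ) ≤ j then (i : ℕ) + 1 else i) (2 * n - (j + 1)))]
  exact sum_congr rfl fun j _ => Fin.sum_univ_eq_sum_range (fun i =>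
    Nat.dist (if i ≤ j then i + 1 else i) (2 * n - (j + 1))) _

/-- The mutual attraction distance between `ID^{2n}` and `MD^{2n}` equals
`(8/3)n³ − 2n² − (2/3)n` (stated multiplied by 3 to stay in `ℕ`). -/
theorem matDist_ID_MD (n : ℕ) :
    3 * matDist (IDmat n) (MDmat n) + 6 * n ^ 2 + 2 * n = 8 * n ^ 3 := by
  obtain _ | p := n
  · rw [matDist_IDmat_MDmat]
    simp
  have hsum : matDist (IDmat (p + 1)) (MDmat (p + 1)) =
      ∑ j ∈ range (2 * p + 1), ∑ i ∈ range (2 * p + 1 + 1),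
        Nat.dist (if i ≤ j then i + 1 else i) (2 * p + 1 - j) := by
    rw [matDist_IDmat_MDmat, show 2 * (p + 1) - 1 = 2 * p + 1 by omega]
    exact sum_congr rfl fun j _ => sum_congr rfl fun i _ => by congr 1; omega
  have hextra : ∑ j ∈ range (2 * p + 1), Nat.dist (j + 1) (2 * p + 1 - j) = 2 * (p * (p + 1)) := by
    rw [← sum_range_dist_center, mul_sum]
    refine sum_congr rfl fun j hj => ?_
    simp only [mem_range] at hj
    simp only [Nat.dist]
    omega
  have hsquare := three_mul_sum_range_sum_range_dist_add (2 * p + 1)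
  rw [hsum, sum_range_sum_range_dist_ite, hextra]
  linarith
end
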